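/- Let A be a small preadditive category and t = (T,F) a hereditary torsion pair in Mod A. Then t is of finite type if and only if the Grothendieck topology G^T associated to T (given by G^T_a = {R ≤ H_a : H_a/R ∈ T}) has a basis of finitely generated right ideals, i.e. there is a family B = {B_a : a ∈ Ob(A)} with B_a ⊆ G^T_a consisting of finitely generated submodules of H_a, such that every R ∈ G^T_a contains some S ∈ B_a. -/

import Mathlib

/-!
(⇒) Let `R ≤ H_a` with `H_a/R` torsion. `R` is the directed union of the finitely generated
subobjects `R_s` spanned by finite sets `s` of its elements. The torsion-free quotients of the
`H_a/R_s` form a direct system in `F`, so their colimit is torsion-free. The induced map from `H_a`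
kills `R`, so it factors through the torsion module `H_a/R` and is zero. Hence the image of `1_a`
vanishes at some stage `s`, i.e. `H_a/R_s` has zero torsion-free quotient and is torsion.

(⇐) Let `f : Y ⟶ colim D` with `Y` torsion and each `D_j` torsion-free, and let `y ∈ Y(a)`. By
heredity the kernel of `φ : H_a → Y → colim D` has torsion cokernel, so it contains a finitely
generated `S` from the basis. `φ` lifts to some `H_a → D_j`; since `S` is finitely generated the
lift vanishes on `S` at a later stage `k`, and a map into the torsion-free `D_k` that vanishes on
`S` factors through the torsion module `H_a/S`, so it is zero.
-/

open CategoryTheory CategoryTheory.Limits Opposite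
noncomputable section
universe u
variable (A : Type u) [SmallCategory A] [Preadditive A]

abbrev PMod := Aᵒᵖ ⥤ AddCommGrpCat.{u}

def Hrep (b : A) : PMod A where
  obj a := AddCommGrpCat.of (unop a ⟶ b)
  map f := AddCommGrpCat.ofHom (AddMonoidHom.mk' (fun g => f.unop ≫ g)
    (fun g h => Preadditive.comp_add _ _ _ _ _ _))
  map_id a := by ext g; simp
  map_comp f g := by
    ext h
    show (f ≫ g).unop ≫ h = g.unop ≫ f.unop ≫ h
    simp

def toH {a b : A} (γ : a ⟶ b) : ((Hrep A b).obj (op a)) := γ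

def Hmap {b b' : A} (r : b ⟶ b') : Hrep A b ⟶ Hrep A b' where
  app a := AddCommGrpCat.ofHom (AddMonoidHom.mk' (fun g => g ≫ r)
    (fun g h => Preadditive.add_comp _ _ _ _ _ _))
  naturality a a' f := by
    ext g
    exact Category.assoc (obj := A) f.unop g r

def inSub {M : PMod A} (R : Subobject M) {a : A} (x : M.obj (op a)) : Prop :=
  ∃ y, R.arrow.app (op a) y = x


def IsTorsionPair (T F : Set (PMod A)) : Prop :=
  T = {X | X.Additive ∧ ∀ Y ∈ F, ∀ f : X ⟶ Y, f = 0} ∧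
  F = {X | X.Additive ∧ ∀ Y ∈ T, ∀ f : Y ⟶ X, f = 0} ∧
  ∀ X : PMod A, X.Additive →
    ∃ (Z : PMod A) (p : X ⟶ Z), Z ∈ F ∧ Epi p ∧ kernel p ∈ T

/-- The torsion-free class is closed under direct limits. -/
def ClosedUnderDirectLimits (F : Set (PMod A)) : Prop :=
  ∀ (J : Type u) [SmallCategory J] [IsFiltered J] (D : J ⥤ PMod A),
    (∀ j, D.obj j ∈ F) → colimit D ∈ F

/-- `M` is a finitely generated module: an epimorphic image of a finite coproduct of
representables. -/
def IsFinitelyGenerated (M : PMod A) : Prop :=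
  ∃ (n : ℕ) (g : Fin n → A) (p : (∐ fun i => Hrep A (g i)) ⟶ M), Epi p


variable {A}

section Additive

instance Hrep.additive (b : A) : (Hrep A b).Additive where
  map_add {_ _ f g} := by
    ext γ
    exact Preadditive.add_comp _ _ _ f.unop g.unop (γ : _ ⟶ b)

lemma additive_of_epi {X Y : PMod A} (p : X ⟶ Y) [Epi p] [X.Additive] : Y.Additive where
  map_add {a _ f g} := by
    rw [← cancel_epi (p.app a), ← p.naturality, Functor.map_add, Preadditive.add_comp,
      p.naturality, p.naturality, Preadditive.comp_add]

lemma additive_of_mono {X Y : PMod A} (i : X ⟶ Y) [Mono i] [Y.Additive] : X.Additive where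
  map_add {_ b f g} := by
    rw [← cancel_mono (i.app b), i.naturality, Functor.map_add, Preadditive.comp_add,
      ← i.naturality, ← i.naturality, Preadditive.add_comp]

instance additive_cokernel {X Y : PMod A} [Y.Additive] (f : X ⟶ Y) : (cokernel f).Additive :=
  additive_of_epi (cokernel.π f)

instance additive_subobject {X : PMod A} [X.Additive] (R : Subobject X) :
    (R : PMod A).Additive :=
  additive_of_mono R.arrow

instance additive_colimit {J : Type u} [SmallCategory J] (D : J ⥤ PMod A)
    [∀ j, (D.obj j).Additive] : (colimit D).Additive where
  map_add {_ _ f g} := by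
    refine colimit_obj_ext fun j => ?_
    rw [← (colimit.ι D j).naturality, Functor.map_add, Preadditive.add_comp, Preadditive.comp_add,
      (colimit.ι D j).naturality, (colimit.ι D j).naturality]

end Additive

section Representable

variable {X Y : PMod A} {a : A}

def elementHom [X.Additive] (x : X.obj (op a)) : Hrep A a ⟶ X where
  app a' := AddCommGrpCat.ofHom (AddMonoidHom.mk' (fun γ => X.map (γ : unop a' ⟶ a).op x)
    (fun γ δ => by
      rw [show (γ + δ : unop a' ⟶ a).op = γ.op + δ.op from rfl, Functor.map_add]
      rfl))
  naturality a' a'' f := by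
    ext γ
    exact congrArg (fun m => m x) (X.map_comp (γ : unop a' ⟶ a).op f)

lemma elementHom_app [X.Additive] (x : X.obj (op a)) {a' : A} (γ : a' ⟶ a) :
    (elementHom x).app (op a') (toH A γ) = X.map γ.op x := rfl

lemma elementHom_app_id [X.Additive] (x : X.obj (op a)) :
    (elementHom x).app (op a) (toH A (𝟙 a)) = x := by
  rw [elementHom_app, op_id, X.map_id]
  rfl

lemma Hrep.hom_app (φ : Hrep A a ⟶ X) {a' : A} (γ : a' ⟶ a) :
    φ.app (op a') (toH A γ) = X.map γ.op (φ.app (op a) (toH A (𝟙 a))) := by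
  have hγ : (Hrep A a).map γ.op (toH A (𝟙 a)) = toH A γ := Category.comp_id γ
  rw [← hγ]
  exact congrArg (fun m => m (toH A (𝟙 a))) (φ.naturality γ.op)

lemma Hrep.hom_ext {φ ψ : Hrep A a ⟶ X}
    (h : φ.app (op a) (toH A (𝟙 a)) = ψ.app (op a) (toH A (𝟙 a))) : φ = ψ := by
  ext a' γ
  exact (Hrep.hom_app φ (γ : unop a' ⟶ a)).trans ((congrArg _ h).trans (Hrep.hom_app ψ _).symm)

lemma Hrep.eq_elementHom [X.Additive] (φ : Hrep A a ⟶ X) :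
    φ = elementHom (φ.app (op a) (toH A (𝟙 a))) :=
  Hrep.hom_ext (elementHom_app_id _).symm

lemma elementHom_comp [X.Additive] [Y.Additive] (x : X.obj (op a)) (f : X ⟶ Y) :
    elementHom x ≫ f = elementHom (f.app (op a) x) :=
  Hrep.hom_ext (by
    rw [NatTrans.comp_app, ConcreteCategory.comp_apply, elementHom_app_id, elementHom_app_id])

lemma hom_ext_of_elementHom [X.Additive] {f g : X ⟶ Y}
    (h : ∀ (b : A) (x : X.obj (op b)), elementHom x ≫ f = elementHom x ≫ g) : f = g := by
  ext ⟨b⟩ x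
  simpa only [NatTrans.comp_app, ConcreteCategory.comp_apply, elementHom_app_id]
    using congrArg (fun φ => φ.app (op b) (toH A (𝟙 b))) (h b x)

end Representable

lemma isFinitelyGenerated_of_epi {M : PMod A} {ι : Type u} [Finite ι] (g : ι → A)
    (p : (∐ fun i => Hrep A (g i)) ⟶ M) [Epi p] : IsFinitelyGenerated A M := by
  obtain ⟨n, ⟨e⟩⟩ := Finite.exists_equiv_fin ι
  exact ⟨n, g ∘ e.symm, (Sigma.reindex e.symm fun i => Hrep A (g i)).hom ≫ p, epi_comp _ _⟩

namespace CategoryTheory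

section CokernelDiagram

variable {C : Type*} [Category C] [HasZeroMorphisms C] [HasCokernels C] {X : C} {ι : Type*}
  [Preorder ι] {S : ι → Subobject X} (hS : Monotone S)

def Subobject.cokernelDiagram : ι ⥤ C where
  obj i := cokernel (S i).arrow
  map f := cokernel.desc _ (cokernel.π _) (by
    rw [← Subobject.ofLE_arrow (hS (leOfHom f)), Category.assoc, cokernel.condition, comp_zero])
  map_id _ := by ext; simp
  map_comp _ _ := by ext; simp

def Subobject.cokernelDiagramπ : (Functor.const ι).obj X ⟶ Subobject.cokernelDiagram hS where
  app i := cokernel.π (S i).arrow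
  naturality _ _ _ := by simp [Subobject.cokernelDiagram]

end CokernelDiagram

def cokernelKernelSubobjectIso {C : Type*} [Category C] [Abelian C] {X Y : C} (f : X ⟶ Y) :
    cokernel (kernelSubobject f).arrow ≅ image f :=
  cokernelIsoOfEq (kernelSubobject_arrow f).symm ≪≫ cokernelEpiComp _ _ ≪≫
    Abelian.coimageIsoImage' f

end CategoryTheory

section FilteredColimit

lemma exists_colimit_ι_app_eq {K : Type*} [Category K] {J : Type u} [SmallCategory J]
    [IsFiltered J] (D : J ⥤ K ⥤ AddCommGrpCat.{u}) (b : K) (x : (colimit D).obj b) :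
    ∃ (j : J) (y : (D.obj j).obj b), (colimit.ι D j).app b y = x :=
  Concrete.isColimit_exists_rep (D ⋙ (evaluation _ _).obj b)
    (isColimitOfPreserves ((evaluation _ _).obj b) (colimit.isColimit D)) x

lemma exists_map_app_eq_zero {K : Type*} [Category K] {J : Type u} [SmallCategory J]
    [IsFiltered J] (D : J ⥤ K ⥤ AddCommGrpCat.{u}) {b : K} {j : J} (y : (D.obj j).obj b)
    (hy : (colimit.ι D j).app b y = 0) : ∃ (k : J) (t : j ⟶ k), (D.map t).app b y = 0 := by
  obtain ⟨k, t, t', h⟩ := Concrete.isColimit_exists_of_rep_eq (i := j) (j := j)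
    (D ⋙ (evaluation _ _).obj b)
    (isColimitOfPreserves ((evaluation _ _).obj b) (colimit.isColimit D)) y 0
    (hy.trans (map_zero _).symm)
  exact ⟨k, t, h.trans (map_zero _)⟩

variable {J : Type u} [SmallCategory J] [IsFiltered J] (D : J ⥤ PMod A)

lemma Hrep.exists_comp_colimit_ι_eq [∀ j, (D.obj j).Additive] {a : A}
    (φ : Hrep A a ⟶ colimit D) : ∃ (j : J) (ψ : Hrep A a ⟶ D.obj j), ψ ≫ colimit.ι D j = φ := by
  obtain ⟨j, y, hy⟩ := exists_colimit_ι_app_eq D (op a) (φ.app (op a) (toH A (𝟙 a)))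
  exact ⟨j, elementHom y, by rw [elementHom_comp, hy, ← Hrep.eq_elementHom]⟩

lemma Hrep.exists_comp_map_eq_zero {a : A} {j : J} (φ : Hrep A a ⟶ D.obj j)
    (hφ : φ ≫ colimit.ι D j = 0) : ∃ (k : J) (t : j ⟶ k), φ ≫ D.map t = 0 := by
  obtain ⟨k, t, ht⟩ := exists_map_app_eq_zero D (φ.app (op a) (toH A (𝟙 a)))
    (congrArg (fun ψ => ψ.app (op a) (toH A (𝟙 a))) hφ)
  exact ⟨k, t, Hrep.hom_ext ht⟩

lemma Hrep.exists_comp_map_eq_zero_of_fin {n : ℕ} {g : Fin n → A} {j : J}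
    (φ : ∀ i, Hrep A (g i) ⟶ D.obj j) (hφ : ∀ i, φ i ≫ colimit.ι D j = 0) :
    ∃ (k : J) (t : j ⟶ k), ∀ i, φ i ≫ D.map t = 0 := by
  induction n generalizing j with
  | zero => exact ⟨j, 𝟙 j, fun i => i.elim0⟩
  | succ n ih =>
    obtain ⟨k, t, ht⟩ := Hrep.exists_comp_map_eq_zero D (φ 0) (hφ 0)
    obtain ⟨l, s, hs⟩ := ih (fun i => φ i.succ ≫ D.map t)
      (fun i => by rw [Category.assoc, colimit.w, hφ])
    refine ⟨l, t ≫ s, Fin.cases ?_ fun i => ?_⟩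
    · rw [D.map_comp, ← Category.assoc, ht, zero_comp]
    · rw [D.map_comp, ← Category.assoc, hs i]

lemma IsFinitelyGenerated.exists_comp_map_eq_zero {M : PMod A} (hM : IsFinitelyGenerated A M)
    {j : J} (φ : M ⟶ D.obj j) (hφ : φ ≫ colimit.ι D j = 0) :
    ∃ (k : J) (t : j ⟶ k), φ ≫ D.map t = 0 := by
  obtain ⟨n, g, p, hp⟩ := hM
  obtain ⟨k, t, ht⟩ := Hrep.exists_comp_map_eq_zero_of_fin D
    (fun i => Sigma.ι (fun i => Hrep A (g i)) i ≫ p ≫ φ)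
    (fun i => by rw [Category.assoc, Category.assoc, hφ, comp_zero, comp_zero])
  refine ⟨k, t, (cancel_epi p).1 (Sigma.hom_ext _ _ fun i => ?_)⟩
  rw [comp_zero, comp_zero, ← ht i, Category.assoc, Category.assoc]

end FilteredColimit

section FiniteSpan

abbrev Elements (X : PMod A) : Type u := Σ b : A, X.obj (op b)

def generators {X : PMod A} [X.Additive] (s : Finset (Elements X)) :
    (∐ fun x : s => Hrep A x.1.1) ⟶ X :=
  Sigma.desc fun x => elementHom x.1.2

lemma ι_generators {X : PMod A} [X.Additive] {s : Finset (Elements X)} {x : Elements X}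
    (hx : x ∈ s) : Sigma.ι (fun x : s => Hrep A x.1.1) ⟨x, hx⟩ ≫ generators s = elementHom x.2 :=
  Sigma.ι_desc _ _

variable {M : PMod A} [M.Additive] (R : Subobject M)

abbrev finSpan (s : Finset (Elements (R : PMod A))) : Subobject M :=
  imageSubobject (generators s ≫ R.arrow)

lemma finSpan_le (s : Finset (Elements (R : PMod A))) : finSpan R s ≤ R := by
  refine (imageSubobject_comp_le _ _).trans ?_
  rw [imageSubobject_mono, Subobject.mk_arrow]

lemma finSpan_mono : Monotone (finSpan R) := by
  intro s t hst
  have hfac : generators s =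
      Sigma.desc (fun x : s => Sigma.ι (fun x : t => Hrep A x.1.1) ⟨x, hst x.2⟩) ≫ generators t :=
    Sigma.hom_ext _ _ fun x => by rw [Sigma.ι_desc_assoc, ι_generators, ι_generators]
  dsimp only [finSpan]
  simp only [hfac, Category.assoc]
  exact imageSubobject_comp_le _ _

lemma isFinitelyGenerated_finSpan (s : Finset (Elements (R : PMod A))) :
    IsFinitelyGenerated A (finSpan R s : PMod A) :=
  isFinitelyGenerated_of_epi (fun x : s => x.1.1) (factorThruImageSubobject _)

lemma elementHom_comp_cokernelDiagramπ_finSpan {s : Finset (Elements (R : PMod A))}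
    {x : Elements (R : PMod A)} (hx : x ∈ s) :
    elementHom x.2 ≫ R.arrow ≫ (Subobject.cokernelDiagramπ (finSpan_mono R)).app s = 0 := by
  change elementHom x.2 ≫ R.arrow ≫ cokernel.π (finSpan R s).arrow = 0
  rw [← ι_generators hx, Category.assoc, ← Category.assoc (generators s),
    ← imageSubobject_arrow_comp (generators s ≫ R.arrow), Category.assoc, cokernel.condition,
    comp_zero, comp_zero]

end FiniteSpan

namespace IsTorsionPair

variable {T F : Set (PMod A)} (h : IsTorsionPair A T F)
include h

lemma additive_of_mem_torsion {X : PMod A} (hX : X ∈ T) : X.Additive := by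
  rw [h.1] at hX
  exact hX.1

lemma additive_of_mem_torsionFree {X : PMod A} (hX : X ∈ F) : X.Additive := by
  rw [h.2.1] at hX
  exact hX.1

lemma hom_eq_zero {X Y : PMod A} (hX : X ∈ T) (hY : Y ∈ F) (f : X ⟶ Y) : f = 0 := by
  rw [h.1] at hX
  exact hX.2 Y hY f

lemma mem_torsionFree_of_hom_eq_zero {X : PMod A} [X.Additive]
    (hX : ∀ Y ∈ T, ∀ f : Y ⟶ X, f = 0) : X ∈ F := by
  rw [h.2.1]
  exact ⟨inferInstance, hX⟩

lemma mem_torsion_of_epi {X Y : PMod A} (p : X ⟶ Y) [Epi p] (hX : X ∈ T) : Y ∈ T := by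
  have := h.additive_of_mem_torsion hX
  rw [h.1]
  refine ⟨additive_of_epi p, fun Z hZ f => ?_⟩
  rw [← cancel_epi p, h.hom_eq_zero hX hZ (p ≫ f), comp_zero]

lemma image_comp_mem_torsion (hher : ∀ (S X : PMod A) (f : S ⟶ X), Mono f → X ∈ T → S ∈ T)
    {X Y Z : PMod A} (ψ : X ⟶ Y) (f : Y ⟶ Z) (hY : Y ∈ T) : image (ψ ≫ f) ∈ T :=
  hher _ _ (image.preComp ψ f) inferInstance (h.mem_torsion_of_epi (factorThruImage f) hY)

lemma eq_zero_of_comp_eq_zero {K X W : PMod A} (i : K ⟶ X) (hi : cokernel i ∈ T) (hW : W ∈ F)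
    {ψ : X ⟶ W} (hψ : i ≫ ψ = 0) : ψ = 0 := by
  rw [← cokernel.π_desc i ψ hψ, h.hom_eq_zero hi hW (cokernel.desc i ψ hψ), comp_zero]

def torsionFreeQuotient (X : PMod A) [hX : X.Additive] : PMod A := (h.2.2 X hX).choose

def toTorsionFreeQuotient (X : PMod A) [hX : X.Additive] : X ⟶ h.torsionFreeQuotient X :=
  (h.2.2 X hX).choose_spec.choose

lemma torsionFreeQuotient_mem (X : PMod A) [hX : X.Additive] : h.torsionFreeQuotient X ∈ F :=
  (h.2.2 X hX).choose_spec.choose_spec.1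

instance epi_toTorsionFreeQuotient (X : PMod A) [hX : X.Additive] :
    Epi (h.toTorsionFreeQuotient X) :=
  (h.2.2 X hX).choose_spec.choose_spec.2.1

lemma kernel_toTorsionFreeQuotient_mem (X : PMod A) [hX : X.Additive] :
    kernel (h.toTorsionFreeQuotient X) ∈ T :=
  (h.2.2 X hX).choose_spec.choose_spec.2.2

lemma mem_torsion_of_toTorsionFreeQuotient_eq_zero {X : PMod A} [X.Additive]
    (h0 : h.toTorsionFreeQuotient X = 0) : X ∈ T :=
  have := kernel.ι_of_zero h0
  h.mem_torsion_of_epi (kernel.ι _) (h.kernel_toTorsionFreeQuotient_mem X)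

def torsionFreeQuotientDesc {X W : PMod A} [X.Additive] (u : X ⟶ W) (hW : W ∈ F) :
    h.torsionFreeQuotient X ⟶ W :=
  Abelian.epiDesc (h.toTorsionFreeQuotient X) u
    (h.hom_eq_zero (h.kernel_toTorsionFreeQuotient_mem X) hW _)

@[simp]
lemma toTorsionFreeQuotient_desc {X W : PMod A} [X.Additive] (u : X ⟶ W) (hW : W ∈ F) :
    h.toTorsionFreeQuotient X ≫ h.torsionFreeQuotientDesc u hW = u :=
  Abelian.comp_epiDesc _ _ _

def torsionFreeDiagram {J : Type*} [Category J] (G : J ⥤ PMod A) [∀ j, (G.obj j).Additive] :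
    J ⥤ PMod A where
  obj j := h.torsionFreeQuotient (G.obj j)
  map t := h.torsionFreeQuotientDesc (G.map t ≫ h.toTorsionFreeQuotient _)
    (h.torsionFreeQuotient_mem _)
  map_id _ := by
    rw [← cancel_epi (h.toTorsionFreeQuotient _)]
    simp
  map_comp _ _ := by
    rw [← cancel_epi (h.toTorsionFreeQuotient _), toTorsionFreeQuotient_desc, ← Category.assoc,
      toTorsionFreeQuotient_desc, Category.assoc, toTorsionFreeQuotient_desc, G.map_comp,
      Category.assoc]

def toTorsionFreeDiagram {J : Type*} [Category J] (G : J ⥤ PMod A) [∀ j, (G.obj j).Additive] :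
    G ⟶ h.torsionFreeDiagram G where
  app j := h.toTorsionFreeQuotient (G.obj j)
  naturality _ _ _ := (h.toTorsionFreeQuotient_desc _ (h.torsionFreeQuotient_mem _)).symm

lemma exists_finSpan_cokernel_mem (hF : ClosedUnderDirectLimits A F) {a : A}
    (R : Subobject (Hrep A a)) (hR : cokernel R.arrow ∈ T) :
    ∃ s, cokernel (finSpan R s).arrow ∈ T := by
  classical
  let G := Subobject.cokernelDiagram (finSpan_mono R)
  have : ∀ s, (G.obj s).Additive := fun s => additive_cokernel (finSpan R s).arrow
  let D := h.torsionFreeDiagram G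
  let c := Subobject.cokernelDiagramπ (finSpan_mono R) ≫ h.toTorsionFreeDiagram G
  let w := c.app ∅ ≫ colimit.ι D ∅
  have hc : ∀ {s t} (hst : s ⟶ t), c.app s ≫ D.map hst = c.app t := fun hst =>
    (c.naturality hst).symm.trans (Category.id_comp _)
  have hw : ∀ s, c.app s ≫ colimit.ι D s = w := fun s => by
    rw [← hc (homOfLE (Finset.empty_subset s)), Category.assoc, colimit.w]
  have hRw : R.arrow ≫ w = 0 := hom_ext_of_elementHom fun b x => by
    have hx : elementHom x ≫ R.arrow ≫ (Subobject.cokernelDiagramπ (finSpan_mono R)).app {⟨b, x⟩}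
        = 0 := elementHom_comp_cokernelDiagramπ_finSpan R (Finset.mem_singleton_self _)
    rw [comp_zero, ← hw {⟨b, x⟩}, NatTrans.comp_app]
    simp only [← Category.assoc]
    rw [Category.assoc (elementHom x), hx, zero_comp, zero_comp]
  have hw0 : w = 0 :=
    h.eq_zero_of_comp_eq_zero R.arrow hR (hF _ D fun s => h.torsionFreeQuotient_mem _) hRw
  obtain ⟨s, t, hs⟩ := Hrep.exists_comp_map_eq_zero D (c.app ∅) hw0
  refine ⟨s, h.mem_torsion_of_toTorsionFreeQuotient_eq_zero ?_⟩
  rw [← cancel_epi (cokernel.π _), comp_zero]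
  exact (hc t).symm.trans hs

lemma hom_to_colimit_eq_zero {J : Type u} [SmallCategory J] [IsFiltered J] (D : J ⥤ PMod A)
    (hD : ∀ j, D.obj j ∈ F) {a : A} (S : Subobject (Hrep A a)) (hS : cokernel S.arrow ∈ T)
    (hSfg : IsFinitelyGenerated A (S : PMod A)) {φ : Hrep A a ⟶ colimit D}
    (hφ : S.arrow ≫ φ = 0) : φ = 0 := by
  have := fun j => h.additive_of_mem_torsionFree (hD j)
  obtain ⟨j, ψ, rfl⟩ := Hrep.exists_comp_colimit_ι_eq D φ
  obtain ⟨k, t, ht⟩ := hSfg.exists_comp_map_eq_zero D (S.arrow ≫ ψ) (by rwa [Category.assoc])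
  have hψ : ψ ≫ D.map t = 0 :=
    h.eq_zero_of_comp_eq_zero S.arrow hS (hD k) (by rwa [← Category.assoc])
  rw [← colimit.w D t, ← Category.assoc, hψ, zero_comp]

lemma colimit_mem_torsionFree_of_basis
    (hher : ∀ (S X : PMod A) (f : S ⟶ X), Mono f → X ∈ T → S ∈ T)
    (B : ∀ a : A, Set (Subobject (Hrep A a)))
    (hB : ∀ (a : A), ∀ R ∈ B a, cokernel R.arrow ∈ T ∧ IsFinitelyGenerated A (R : PMod A))
    (hBR : ∀ (a : A) (R : Subobject (Hrep A a)), cokernel R.arrow ∈ T → ∃ S ∈ B a, S ≤ R)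
    {J : Type u} [SmallCategory J] [IsFiltered J] (D : J ⥤ PMod A) (hD : ∀ j, D.obj j ∈ F) :
    colimit D ∈ F := by
  have := fun j => h.additive_of_mem_torsionFree (hD j)
  refine h.mem_torsionFree_of_hom_eq_zero fun Y hY f => ?_
  have := h.additive_of_mem_torsion hY
  refine hom_ext_of_elementHom fun a y => ?_
  have hker : cokernel (kernelSubobject (elementHom y ≫ f)).arrow ∈ T :=
    h.mem_torsion_of_epi (cokernelKernelSubobjectIso _).inv (h.image_comp_mem_torsion hher _ _ hY)
  obtain ⟨S, hSB, hSker⟩ := hBR a _ hker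
  rw [comp_zero]
  exact h.hom_to_colimit_eq_zero D hD S (hB a S hSB).1 (hB a S hSB).2
    (by rw [← Subobject.ofLE_arrow hSker, Category.assoc, kernelSubobject_arrow_comp, comp_zero])

end IsTorsionPair

theorem statement8 (T F : Set (PMod A)) (h : IsTorsionPair A T F)
    (hher : ∀ (S X : PMod A) (f : S ⟶ X), Mono f → X ∈ T → S ∈ T) :
    ClosedUnderDirectLimits A F ↔
      ∃ B : ∀ a : A, Set (Subobject (Hrep A a)),
        (∀ (a : A), ∀ R ∈ B a, cokernel (Subobject.arrow R) ∈ T ∧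
          IsFinitelyGenerated A (R : PMod A)) ∧
        (∀ (a : A) (R : Subobject (Hrep A a)), cokernel R.arrow ∈ T →
          ∃ S ∈ B a, S ≤ R) := by
  constructor
  · intro hF
    refine ⟨fun a => {S | cokernel S.arrow ∈ T ∧ IsFinitelyGenerated A (S : PMod A)},
      fun a R hR => hR, fun a R hR => ?_⟩
    obtain ⟨s, hs⟩ := h.exists_finSpan_cokernel_mem hF R hR
    exact ⟨finSpan R s, ⟨hs, isFinitelyGenerated_finSpan R s⟩, finSpan_le R s⟩
  · rintro ⟨B, hB, hBR⟩ J _ _ D hD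
    exact h.colimit_mem_torsionFree_of_basis hher B hB hBR D hD
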